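/- Let q and p be probability distributions over the finite sample space Ω = {1,...,n}, and let δ > 0. Define S(δ) as the union of {z : p(z) ≤ δ} and {z : q(z) ≥ δ}. Let KL[q||p] = Σ_{z∈Ω} q(z) log(q(z)/p(z)) and KL̂_δ[q||p] = Σ_{z∈S(δ)} q(z) log(q(z)/p(z)). Then for any ε > 0, choosing δ = min{ (ε/(2n)) / log(2n/ε), 1/e }, we have |KL[q||p] − KL̂_δ[q||p]| < ε. -/
import Mathlib

/-- On `(0, 1/e]`, the function `x ↦ x * log x⁻¹` is monotone up to the bound. -/
lemma aux_xlogx {x δ : ℝ} (hx : 0 < x) (hxδ : x ≤ δ) (h1 : 1 ≤ Real.log δ⁻¹) :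
    x * Real.log x⁻¹ ≤ δ * Real.log δ⁻¹ := by
  have hδ0 : 0 < δ := lt_of_lt_of_le hx hxδ
  have h2 : Real.log x⁻¹ = Real.log (δ / x) + Real.log δ⁻¹ := by
    rw [← Real.log_mul (by positivity) (by positivity)]
    congr 1
    field_simp
  have h3 : Real.log (δ / x) ≤ δ / x - 1 := Real.log_le_sub_one_of_pos (by positivity)
  have h4 : x * Real.log (δ / x) ≤ δ - x := by
    calc x * Real.log (δ / x) ≤ x * (δ / x - 1) :=
          mul_le_mul_of_nonneg_left h3 hx.le
      _ = δ - x := by field_simp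
  have h5 : δ - x ≤ (δ - x) * Real.log δ⁻¹ :=
    le_mul_of_one_le_right (by linarith) h1
  calc x * Real.log x⁻¹ = x * Real.log (δ / x) + x * Real.log δ⁻¹ := by rw [h2]; ring
    _ ≤ (δ - x) * Real.log δ⁻¹ + x * Real.log δ⁻¹ := by linarith
    _ = δ * Real.log δ⁻¹ := by ring

open Classical in
/-- Error guarantee for the truncated KL approximation with the explicit choice of δ. -/
theorem stmt_0 {Ω : Type*} [Fintype Ω] (q p : Ω → ℝ)
    (hq0 : ∀ z, 0 ≤ q z) (hp0 : ∀ z, 0 < p z)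
    (hq1 : ∑ z, q z = 1) (hp1 : ∑ z, p z = 1)
    (n : ℝ) (hn : n = (Fintype.card Ω : ℝ))
    (ε : ℝ) (hε : 0 < ε)
    (δ : ℝ) (hδ : δ = min ((ε / (2 * n)) / Real.log (2 * n / ε)) (1 / Real.exp 1)) :
    |(∑ z, q z * Real.log (q z / p z)) -
        (∑ z ∈ Finset.univ.filter (fun z => p z ≤ δ ∨ δ ≤ q z),
          q z * Real.log (q z / p z))| < ε := by
  -- trivial case: δ ≤ 0
  by_cases hδ0 : δ ≤ 0
  · have hfilt : Finset.univ.filter (fun z => p z ≤ δ ∨ δ ≤ q z) = Finset.univ := by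
      apply Finset.filter_true_of_mem
      intro z _
      exact Or.inr (le_trans hδ0 (hq0 z))
    rw [hfilt]
    simpa using hε
  push_neg at hδ0
  -- Ω is nonempty, so n ≥ 1
  have hnemp : Nonempty Ω := by
    by_contra h
    rw [not_nonempty_iff] at h
    rw [Finset.univ_eq_empty, Finset.sum_empty] at hq1
    norm_num at hq1
  have hcard : (0 : ℕ) < Fintype.card Ω := Fintype.card_pos
  have hn1 : 1 ≤ n := by rw [hn]; exact_mod_cast hcard
  have hnpos : 0 < n := lt_of_lt_of_le one_pos hn1
  -- p z ≤ 1
  have hple : ∀ z, p z ≤ 1 := by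
    intro z
    rw [← hp1]
    exact Finset.single_le_sum (fun i _ => (hp0 i).le) (Finset.mem_univ z)
  -- notation
  set a : ℝ := (ε / (2 * n)) / Real.log (2 * n / ε) with ha
  set L : ℝ := Real.log (2 * n / ε) with hL
  have hδa : δ ≤ a := hδ ▸ min_le_left _ _
  have hδe : δ ≤ 1 / Real.exp 1 := hδ ▸ min_le_right _ _
  have hapos : 0 < a := lt_of_lt_of_le hδ0 hδa
  have hxpos : 0 < ε / (2 * n) := by positivity
  have hLpos : 0 < L := by
    by_contra hc
    push_neg at hc
    have : a ≤ 0 := div_nonpos_of_nonneg_of_nonpos hxpos.le hc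
    linarith
  -- log δ⁻¹ ≥ 1
  have hδinv : Real.exp 1 ≤ δ⁻¹ := by
    rw [← one_div, le_div_iff₀ hδ0]
    have h1 : Real.exp 1 * (1 / Real.exp 1) = 1 := by
      field_simp
    nlinarith [mul_le_mul_of_nonneg_left hδe (Real.exp_pos 1).le]
  have hlog1 : 1 ≤ Real.log δ⁻¹ := by
    calc (1 : ℝ) = Real.log (Real.exp 1) := (Real.log_exp 1).symm
      _ ≤ Real.log δ⁻¹ := Real.log_le_log (Real.exp_pos 1) hδinv
  set M : ℝ := δ * Real.log δ⁻¹ with hM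
  have hMpos : 0 < M := by
    apply mul_pos hδ0; linarith
  -- the difference equals the sum over the complement
  have hsplit : (∑ z, q z * Real.log (q z / p z)) -
      (∑ z ∈ Finset.univ.filter (fun z => p z ≤ δ ∨ δ ≤ q z),
        q z * Real.log (q z / p z)) =
      ∑ z ∈ Finset.univ.filter (fun z => ¬(p z ≤ δ ∨ δ ≤ q z)),
        q z * Real.log (q z / p z) := by
    rw [← Finset.sum_filter_add_sum_filter_not Finset.univ
      (fun z => p z ≤ δ ∨ δ ≤ q z) (fun z => q z * Real.log (q z / p z))]
    ring
  rw [hsplit]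
  -- per-term bound
  have hterm : ∀ z ∈ Finset.univ.filter (fun z => ¬(p z ≤ δ ∨ δ ≤ q z)),
      |q z * Real.log (q z / p z)| ≤ M := by
    intro z hz
    simp only [Finset.mem_filter, Finset.mem_univ, true_and, not_or, not_le] at hz
    obtain ⟨hpz, hqz⟩ := hz
    rcases eq_or_lt_of_le (hq0 z) with hq | hq
    · rw [← hq]
      simp [hMpos.le]
    · have hub : q z * Real.log (q z / p z) ≤ 0 := by
        apply mul_nonpos_of_nonneg_of_nonpos (hq0 z)
        apply Real.log_nonpos (div_nonneg (hq0 z) (hp0 z).le)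
        rw [div_le_one (hp0 z)]
        linarith
      have hlb : -M ≤ q z * Real.log (q z / p z) := by
        have hld : Real.log (q z / p z) = Real.log (q z) - Real.log (p z) :=
          Real.log_div (ne_of_gt hq) (ne_of_gt (hp0 z))
        have hlp : Real.log (p z) ≤ 0 := Real.log_nonpos (hp0 z).le (hple z)
        have hkey : q z * Real.log (q z)⁻¹ ≤ M :=
          aux_xlogx hq hqz.le hlog1
        rw [Real.log_inv] at hkey
        have : -M ≤ q z * Real.log (q z) := by nlinarith
        rw [hld]
        nlinarith [mul_nonneg (hq0 z) (neg_nonneg.mpr hlp)]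
      exact abs_le.mpr ⟨hlb, le_trans hub hMpos.le⟩
  -- sum bound
  have hsum : |∑ z ∈ Finset.univ.filter (fun z => ¬(p z ≤ δ ∨ δ ≤ q z)),
      q z * Real.log (q z / p z)| ≤ n * M := by
    calc |∑ z ∈ Finset.univ.filter (fun z => ¬(p z ≤ δ ∨ δ ≤ q z)),
        q z * Real.log (q z / p z)|
        ≤ ∑ z ∈ Finset.univ.filter (fun z => ¬(p z ≤ δ ∨ δ ≤ q z)),
          |q z * Real.log (q z / p z)| := Finset.abs_sum_le_sum_abs _ _
      _ ≤ (Finset.univ.filter (fun z => ¬(p z ≤ δ ∨ δ ≤ q z))).card • M :=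
          Finset.sum_le_card_nsmul _ _ M hterm
      _ = ((Finset.univ.filter (fun z => ¬(p z ≤ δ ∨ δ ≤ q z))).card : ℝ) * M := by
          rw [nsmul_eq_mul]
      _ ≤ n * M := by
          apply mul_le_mul_of_nonneg_right _ hMpos.le
          rw [hn]
          exact_mod_cast Finset.card_le_card (Finset.filter_subset _ _) |>.trans
            (le_of_eq (Finset.card_univ))
  -- final bound: n * M < ε
  have hfinal : n * M < ε := by
    rcases le_total a (1 / Real.exp 1) with hcase | hcase
    · -- δ = a
      have hδeq : δ = a := by rw [hδ, min_eq_left hcase]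
      have hLe : L = Real.log (2 * n) - Real.log ε := by
        rw [hL, Real.log_div (by positivity) (ne_of_gt hε)]
      have hlogaL : Real.log a⁻¹ = L + Real.log L := by
        rw [ha, Real.log_inv, Real.log_div (ne_of_gt hxpos) (ne_of_gt hLpos),
          Real.log_div (ne_of_gt hε) (by positivity)]
        linarith
      have hlogL : Real.log L ≤ L - 1 := Real.log_le_sub_one_of_pos hLpos
      have : n * M = n * a * (L + Real.log L) := by
        rw [hM, hδeq, hlogaL]; ring
      rw [this]
      have hna : 0 < n * a := mul_pos hnpos hapos
      have h2L : L + Real.log L < 2 * L := by linarith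
      calc n * a * (L + Real.log L) < n * a * (2 * L) := by
            apply mul_lt_mul_of_pos_left h2L hna
        _ = ε := by
            rw [ha]
            field_simp
    · -- δ = 1/e
      have hδeq : δ = 1 / Real.exp 1 := by rw [hδ, min_eq_right hcase]
      have hMe : M = 1 / Real.exp 1 := by
        rw [hM, hδeq, one_div, inv_inv, Real.log_exp]
        ring
      rw [hMe]
      have hepos : 0 < Real.exp 1 := Real.exp_pos 1
      have hkey : n ≤ Real.exp 1 * ε / 2 := by
        rcases le_total (2 * n / ε) (Real.exp 1) with ht | ht
        · rw [div_le_iff₀ hε] at ht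
          linarith
        · -- log(2n/ε) ≥ 1
          have hL1 : 1 ≤ L := by
            rw [hL]
            calc (1:ℝ) = Real.log (Real.exp 1) := (Real.log_exp 1).symm
              _ ≤ Real.log (2 * n / ε) := Real.log_le_log hepos ht
          have haux : 1 / Real.exp 1 ≤ a := hcase
          have : 1 / Real.exp 1 ≤ (ε / (2 * n)) / L := haux
          have h1 : (ε / (2 * n)) / L ≤ ε / (2 * n) := by
            apply div_le_self hxpos.le hL1
          have h2 : 1 / Real.exp 1 ≤ ε / (2 * n) := le_trans this h1
          rw [div_le_div_iff₀ hepos (by positivity)] at h2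
          linarith
      calc n * (1 / Real.exp 1) ≤ (Real.exp 1 * ε / 2) * (1 / Real.exp 1) := by
            apply mul_le_mul_of_nonneg_right hkey (by positivity)
        _ = ε / 2 := by field_simp
        _ < ε := by linarith
  exact lt_of_le_of_lt hsum hfinal
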